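/- Let k be a field with char k ≠ 2. The periplectic Brauer algebra A₂ over k is isomorphic as a k-algebra to the algebra of upper triangular 2×2 matrices over k (the path algebra of the quiver with two vertices and one arrow). -/
import Mathlib


namespace PeriplecticPaper

/-- The two generators `s` and `ε` of the periplectic Brauer algebra `A₂`. -/
inductive PBGen : Type
  | s
  | e

open FreeAlgebra

/-- The defining relations of the periplectic Brauer algebra `A₂`:
`s² = 1`, `ε² = 0`, `s·ε = ε` and `ε·s = -ε`.  Taking the ring quotient by this
relation is the quotient of the free algebra on `s, ε` by the two-sided ideal
generated by `s² - 1`, `ε²`, `s·ε - ε` and `ε·s + ε`. -/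
inductive A2Rel (k : Type) [Field k] :
    FreeAlgebra k PBGen → FreeAlgebra k PBGen → Prop
  | ss : A2Rel k (ι k PBGen.s * ι k PBGen.s) 1
  | ee : A2Rel k (ι k PBGen.e * ι k PBGen.e) 0
  | se : A2Rel k (ι k PBGen.s * ι k PBGen.e) (ι k PBGen.e)
  | es : A2Rel k (ι k PBGen.e * ι k PBGen.s) (-(ι k PBGen.e))

/-- The periplectic Brauer algebra `A₂` over the field `k`:  the quotient of the free
associative unital `k`-algebra on generators `s, ε` by the two-sided ideal generated by
`s² - 1`, `ε²`, `s·ε - ε` and `ε·s + ε`. -/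
abbrev A2 (k : Type) [Field k] : Type := RingQuot (A2Rel k)

/-- The image in `A₂` of the generator `s`. -/
noncomputable def sBar (k : Type) [Field k] : A2 k :=
  RingQuot.mkAlgHom k (A2Rel k) (ι k PBGen.s)

/-- The image in `A₂` of the generator `ε`. -/
noncomputable def eBar (k : Type) [Field k] : A2 k :=
  RingQuot.mkAlgHom k (A2Rel k) (ι k PBGen.e)

/-- The algebra of upper triangular `2 × 2` matrices over `k`: the subalgebra of
matrices `M` with `M 1 0 = 0`. -/
def upperTriangular2 (k : Type) [Field k] :
    Subalgebra k (Matrix (Fin 2) (Fin 2) k) where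
  carrier := {M | M 1 0 = 0}
  mul_mem' := by
    intro a b ha hb
    simp only [Set.mem_setOf_eq] at ha hb ⊢
    simp [Matrix.mul_apply, Fin.sum_univ_two, ha, hb]
  one_mem' := by
    simp [Matrix.one_apply]
  add_mem' := by
    intro a b ha hb
    simp only [Set.mem_setOf_eq] at ha hb ⊢
    simp [ha, hb]
  zero_mem' := by simp
  algebraMap_mem' := by
    intro r
    simp [Matrix.algebraMap_matrix_apply]

section Aux

variable (k : Type) [Field k]

lemma mem_upperTriangular2 (M : Matrix (Fin 2) (Fin 2) k) :
    M ∈ upperTriangular2 k ↔ M 1 0 = 0 := Iff.rfl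

/-- The upper triangular matrix `diag(1,-1)`, target of `s`. -/
noncomputable def Smat : upperTriangular2 k :=
  ⟨!![1, 0; 0, -1], by rw [mem_upperTriangular2]; simp⟩

/-- The upper triangular matrix `E₁₂`, target of `ε`. -/
noncomputable def Emat : upperTriangular2 k :=
  ⟨!![0, 1; 0, 0], by rw [mem_upperTriangular2]; simp⟩

lemma Smat_mul_Smat : Smat k * Smat k = 1 := by
  apply Subtype.ext
  show ((Smat k : Matrix (Fin 2) (Fin 2) k) * (Smat k : Matrix (Fin 2) (Fin 2) k)) = 1
  ext i j
  fin_cases i <;> fin_cases j <;>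
    simp [Smat, Matrix.mul_apply, Fin.sum_univ_two, Matrix.one_apply]

lemma Emat_mul_Emat : Emat k * Emat k = 0 := by
  apply Subtype.ext
  show ((Emat k : Matrix (Fin 2) (Fin 2) k) * (Emat k : Matrix (Fin 2) (Fin 2) k)) = 0
  ext i j
  fin_cases i <;> fin_cases j <;>
    simp [Emat, Matrix.mul_apply, Fin.sum_univ_two]

lemma Smat_mul_Emat : Smat k * Emat k = Emat k := by
  apply Subtype.ext
  show ((Smat k : Matrix (Fin 2) (Fin 2) k) * (Emat k : Matrix (Fin 2) (Fin 2) k))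
      = (Emat k : Matrix (Fin 2) (Fin 2) k)
  ext i j
  fin_cases i <;> fin_cases j <;>
    simp [Smat, Emat, Matrix.mul_apply, Fin.sum_univ_two]

lemma Emat_mul_Smat : Emat k * Smat k = -(Emat k) := by
  apply Subtype.ext
  show ((Emat k : Matrix (Fin 2) (Fin 2) k) * (Smat k : Matrix (Fin 2) (Fin 2) k))
      = -(Emat k : Matrix (Fin 2) (Fin 2) k)
  ext i j
  fin_cases i <;> fin_cases j <;>
    simp [Smat, Emat, Matrix.mul_apply, Fin.sum_univ_two]

/-- Map of generators. -/
noncomputable def f0 : PBGen → upperTriangular2 k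
  | PBGen.s => Smat k
  | PBGen.e => Emat k

/-- The lift to the free algebra. -/
noncomputable def fFree : FreeAlgebra k PBGen →ₐ[k] upperTriangular2 k :=
  FreeAlgebra.lift k (f0 k)

lemma fFree_rel : ∀ ⦃x y : FreeAlgebra k PBGen⦄, A2Rel k x y → fFree k x = fFree k y := by
  intro x y hxy
  cases hxy with
  | ss =>
      simp only [fFree, map_mul, map_one, FreeAlgebra.lift_ι_apply, f0]
      exact Smat_mul_Smat k
  | ee =>
      simp only [fFree, map_mul, map_zero, FreeAlgebra.lift_ι_apply, f0]
      exact Emat_mul_Emat k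
  | se =>
      simp only [fFree, map_mul, FreeAlgebra.lift_ι_apply, f0]
      exact Smat_mul_Emat k
  | es =>
      simp only [fFree, map_mul, map_neg, FreeAlgebra.lift_ι_apply, f0]
      exact Emat_mul_Smat k

/-- The algebra morphism `A₂ → upperTriangular2`. -/
noncomputable def phi : A2 k →ₐ[k] upperTriangular2 k :=
  RingQuot.liftAlgHom k ⟨fFree k, fFree_rel k⟩

lemma phi_sBar : phi k (sBar k) = Smat k := by
  simp [phi, sBar, RingQuot.liftAlgHom_mkAlgHom_apply, fFree, f0]

lemma phi_eBar : phi k (eBar k) = Emat k := by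
  simp [phi, eBar, RingQuot.liftAlgHom_mkAlgHom_apply, fFree, f0]

/-- Relations in `A₂`. -/
lemma sBar_mul_sBar : sBar k * sBar k = 1 := by
  rw [sBar, ← map_mul, RingQuot.mkAlgHom_rel k A2Rel.ss, map_one]

lemma eBar_mul_eBar : eBar k * eBar k = 0 := by
  rw [eBar, ← map_mul, RingQuot.mkAlgHom_rel k A2Rel.ee, map_zero]

lemma sBar_mul_eBar : sBar k * eBar k = eBar k := by
  rw [sBar, eBar, ← map_mul, RingQuot.mkAlgHom_rel k A2Rel.se]

lemma eBar_mul_sBar : eBar k * sBar k = -(eBar k) := by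
  rw [sBar, eBar, ← map_mul, RingQuot.mkAlgHom_rel k A2Rel.es, map_neg]

/-- The span of `1, s, ε` in `A₂`. -/
noncomputable def T : Submodule k (A2 k) :=
  Submodule.span k {1, sBar k, eBar k}

lemma one_mem_T : (1 : A2 k) ∈ T k := Submodule.subset_span (by simp)
lemma sBar_mem_T : sBar k ∈ T k := Submodule.subset_span (by simp)
lemma eBar_mem_T : eBar k ∈ T k := Submodule.subset_span (by simp)

lemma mul_mem_T {x y : A2 k} (hx : x ∈ T k) (hy : y ∈ T k) : x * y ∈ T k := by
  induction hx using Submodule.span_induction with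
  | mem x hx =>
    induction hy using Submodule.span_induction with
    | mem y hy =>
      rcases hx with rfl | rfl | rfl <;> rcases hy with rfl | rfl | rfl <;>
        simp only [one_mul, mul_one, sBar_mul_sBar, eBar_mul_eBar, sBar_mul_eBar,
          eBar_mul_sBar] <;>
        first
          | exact one_mem_T k
          | exact sBar_mem_T k
          | exact eBar_mem_T k
          | exact (T k).zero_mem
          | exact (T k).neg_mem (eBar_mem_T k)
    | zero => simp [(T k).zero_mem]
    | add y z _ _ hy hz => rw [mul_add]; exact (T k).add_mem hy hz
    | smul c y _ hy => rw [mul_smul_comm]; exact (T k).smul_mem c hy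
  | zero => simp [(T k).zero_mem]
  | add x z _ _ hx hz => rw [add_mul]; exact (T k).add_mem hx hz
  | smul c x _ hx => rw [smul_mul_assoc]; exact (T k).smul_mem c hx

lemma mem_T (x : A2 k) : x ∈ T k := by
  obtain ⟨y, rfl⟩ := RingQuot.mkAlgHom_surjective k (A2Rel k) x
  induction y using FreeAlgebra.induction with
  | grade0 r =>
    rw [AlgHom.commutes]
    rw [Algebra.algebraMap_eq_smul_one]
    exact (T k).smul_mem r (one_mem_T k)
  | grade1 x =>
    cases x with
    | s => exact sBar_mem_T k
    | e => exact eBar_mem_T k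
  | mul a b ha hb => rw [map_mul]; exact mul_mem_T k ha hb
  | add a b ha hb => rw [map_add]; exact (T k).add_mem ha hb

/-- The candidate inverse map. -/
noncomputable def g (M : upperTriangular2 k) : A2 k :=
  (((M : Matrix (Fin 2) (Fin 2) k) 0 0 + (M : Matrix (Fin 2) (Fin 2) k) 1 1) / 2) • 1
    + (((M : Matrix (Fin 2) (Fin 2) k) 0 0 - (M : Matrix (Fin 2) (Fin 2) k) 1 1) / 2) • sBar k
    + ((M : Matrix (Fin 2) (Fin 2) k) 0 1) • eBar k

lemma g_add (M N : upperTriangular2 k) : g k (M + N) = g k M + g k N := by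
  simp only [g, Subalgebra.coe_add, Matrix.add_apply]
  module

lemma g_smul (c : k) (M : upperTriangular2 k) : g k (c • M) = c • g k M := by
  simp only [g, SetLike.val_smul, Matrix.smul_apply, smul_eq_mul]
  match_scalars <;> ring

lemma g_one (h2 : (2 : k) ≠ 0) : g k (1 : upperTriangular2 k) = 1 := by
  have h0 : ((1 : upperTriangular2 k) : Matrix (Fin 2) (Fin 2) k) = 1 := rfl
  have : ((1 : k) + 1) / 2 = 1 := by rw [one_add_one_eq_two, div_self h2]
  simp [g, h0, Matrix.one_apply, this]

lemma g_Smat (h2 : (2 : k) ≠ 0) : g k (Smat k) = sBar k := by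
  have : ((1 : k) + 1) / 2 = 1 := by rw [one_add_one_eq_two, div_self h2]
  simp [g, Smat, sub_neg_eq_add, this]

lemma g_Emat : g k (Emat k) = eBar k := by
  simp [g, Emat]

lemma g_phi (h : ringChar k ≠ 2) (x : A2 k) : g k (phi k x) = x := by
  have h2 : (2 : k) ≠ 0 := Ring.two_ne_zero h
  have hx := mem_T k x
  induction hx using Submodule.span_induction with
  | mem x hx =>
    rcases hx with rfl | rfl | rfl
    · rw [map_one, g_one k h2]
    · rw [phi_sBar, g_Smat k h2]
    · rw [phi_eBar, g_Emat]
  | zero => simp [g]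
  | add x y _ _ hx hy => rw [map_add, g_add, hx, hy]
  | smul c x _ hx => rw [map_smul, g_smul, hx]

lemma phi_g (h : ringChar k ≠ 2) (M : upperTriangular2 k) : phi k (g k M) = M := by
  have h2 : (2 : k) ≠ 0 := Ring.two_ne_zero h
  rw [g, map_add, map_add, map_smul, map_smul, map_smul, map_one, phi_sBar, phi_eBar]
  apply Subtype.ext
  have hM : (M : Matrix (Fin 2) (Fin 2) k) 1 0 = 0 := M.2
  push_cast
  ext i j
  fin_cases i <;> fin_cases j <;>
    simp [Smat, Emat, Matrix.one_apply, hM] <;> field_simp <;> ring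

end Aux

/-- If `char k ≠ 2`, the periplectic Brauer algebra `A₂` over `k` is isomorphic, as a
`k`-algebra, to the algebra of upper triangular `2 × 2` matrices over `k`. -/
theorem statement6 (k : Type) [Field k] (h : ringChar k ≠ 2) :
    Nonempty (A2 k ≃ₐ[k] upperTriangular2 k) := by
  refine ⟨AlgEquiv.ofBijective (phi k) ⟨?_, ?_⟩⟩
  · exact Function.LeftInverse.injective (g_phi k h)
  · exact Function.RightInverse.surjective (phi_g k h)

end PeriplecticPaper
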